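/- For integers m, d and nonnegative integer k with d >= k - m, the sum over i from 0 to k of C(m-i, i) * C(i+d, k-i) equals the sum over j from 0 to floor(k/2) of C(m+d-1-2j, k-2j). -/

import Mathlib

/-!
Both sides are integers, so we work with `Ring.choose` on `ℤ`. Write `L m d k` for the left-hand
side and `R (m + d) k` for the right-hand side. Pascal's rule gives the recurrences
`L m (d + 1) (k + 1) = L m d (k + 1) + L m d k`,
`L (m + 1) d (k + 1) = L m d (k + 1) + L (m - 1) (d + 1) k` and
`R (s + 1) (k + 1) = R s (k + 1) + R s k`.
By induction on `k`, the difference `L m d (k + 1) - R (m + d) (k + 1)` is then invariant under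
`m ↦ m + 1` and `d ↦ d + 1`, hence constant. At `(m, d) = (k + 1, 0)` it vanishes, because there
both sides reduce to a single term, equal to `1` or `0` according to the parity of `k + 1`.
-/

/-- The generalized binomial coefficient `C(a, b) = a(a-1)⋯(a-b+1)/b!`
for an integer `a` and a natural number `b`, valued in `ℚ`. -/
noncomputable def genChoose (a : ℤ) (b : ℕ) : ℚ :=
  (∏ i ∈ Finset.range b, ((a : ℚ) - i)) / (Nat.factorial b : ℚ)

open Finset

lemma genChoose_eq_choose (a : ℤ) (b : ℕ) : genChoose a b = Ring.choose a b := by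
  have h := Ring.descPochhammer_eq_factorial_smul_choose a b
  rw [← Polynomial.eval_eq_smeval, descPochhammer_eval_eq_prod_range, nsmul_eq_mul] at h
  rw [genChoose, div_eq_iff (by positivity)]
  exact_mod_cast h.trans (mul_comm _ _)

lemma Int.choose_succ_eq (s : ℤ) (k : ℕ) :
    Ring.choose s (k + 1) = Ring.choose (s - 1) (k + 1) + Ring.choose (s - 1) k := by
  simpa [add_comm] using Ring.choose_succ_succ (s - 1) k

lemma Int.choose_eq_zero_of_lt {n : ℤ} {k : ℕ} (hn : 0 ≤ n) (h : n < k) :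
    Ring.choose n k = 0 := by
  lift n to ℕ using hn
  rw [Ring.choose_natCast, Nat.choose_eq_zero_of_lt (by omega), Nat.cast_zero]

lemma Int.choose_natCast_self (n : ℕ) : Ring.choose (n : ℤ) n = 1 := by
  rw [Ring.choose_natCast, Nat.choose_self, Nat.cast_one]

lemma Function.Periodic.eq_of_period_one {β : Type*} {f : ℤ → β}
    (h : Function.Periodic f 1) (a b : ℤ) : f a = f b := by
  simpa using (h.int_mul_eq a).trans (h.int_mul_eq b).symm

def chooseProdSum (m d : ℤ) (k : ℕ) : ℤ :=
  ∑ i ∈ range (k + 1), Ring.choose (m - i) i * Ring.choose (i + d) (k - i)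

def chooseStepTwoSum (s : ℤ) (k : ℕ) : ℤ :=
  ∑ j ∈ range (k / 2 + 1), Ring.choose (s - 1 - 2 * j) (k - 2 * j)

lemma chooseProdSum_succ_left (m d : ℤ) (k : ℕ) :
    chooseProdSum (m + 1) d (k + 1) =
      chooseProdSum m d (k + 1) + chooseProdSum (m - 1) (d + 1) k := by
  simp only [chooseProdSum]
  rw [sum_range_succ' _ (k + 1), sum_range_succ' _ (k + 1), add_right_comm, ← sum_add_distrib]
  congr 1
  · refine sum_congr rfl fun i _ => ?_
    have hm : m + 1 - ((i + 1 : ℕ) : ℤ) - 1 = m - 1 - i := by push_cast; ring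
    have hm' : m - ((i + 1 : ℕ) : ℤ) = m - 1 - i := by push_cast; ring
    have hd : ((i + 1 : ℕ) : ℤ) + d = i + (d + 1) := by push_cast; ring
    rw [Int.choose_succ_eq, hm, hm', hd, Nat.add_sub_add_right, add_mul]
  · simp

lemma chooseProdSum_succ_right (m d : ℤ) (k : ℕ) :
    chooseProdSum m (d + 1) (k + 1) = chooseProdSum m d (k + 1) + chooseProdSum m d k := by
  simp only [chooseProdSum]
  rw [sum_range_succ _ (k + 1), sum_range_succ _ (k + 1), add_right_comm, ← sum_add_distrib]
  congr 1
  · refine sum_congr rfl fun i hi => ?_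
    rw [mem_range] at hi
    rw [← add_assoc, Nat.sub_add_comm (by omega), Ring.choose_succ_succ, mul_add, add_comm]
  · simp

lemma chooseStepTwoSum_add_two (s : ℤ) (k : ℕ) :
    chooseStepTwoSum s (k + 2) = Ring.choose (s - 1) (k + 2) + chooseStepTwoSum (s - 2) k := by
  simp only [chooseStepTwoSum]
  rw [Nat.add_div_right k two_pos, sum_range_succ', add_comm]
  congr 1
  · simp
  · refine sum_congr rfl fun j _ => ?_
    rw [show k + 2 - 2 * (j + 1) = k - 2 * j by omega]
    congr 1
    push_cast
    ring

lemma chooseStepTwoSum_succ (s : ℤ) (k : ℕ) :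
    chooseStepTwoSum (s + 1) (k + 1) = chooseStepTwoSum s (k + 1) + chooseStepTwoSum s k := by
  induction k using Nat.twoStepInduction generalizing s with
  | zero => simp [chooseStepTwoSum]
  | one =>
    have hs := Int.choose_succ_eq s 1
    rw [Ring.choose_one_right] at hs
    simp [chooseStepTwoSum, sum_range_succ]
    linear_combination hs
  | more k ih _ =>
    rw [chooseStepTwoSum_add_two, chooseStepTwoSum_add_two, chooseStepTwoSum_add_two,
      add_sub_cancel_right, show s + 1 - 2 = s - 2 + 1 by ring, ih]
    linear_combination Int.choose_succ_eq s (k + 2)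

lemma chooseProdSum_natCast_zero_self (k : ℕ) :
    chooseProdSum k 0 k = if Even k then 1 else 0 := by
  rw [chooseProdSum, sum_eq_single_of_mem (k / 2) (by rw [mem_range]; omega)]
  · rcases Nat.even_or_odd' k with ⟨n, rfl | rfl⟩
    · rw [if_pos (even_two_mul n), show 2 * n / 2 = n by omega, show 2 * n - n = n by omega,
        show ((2 * n : ℕ) : ℤ) - n = n by push_cast; ring, add_zero, Int.choose_natCast_self,
        mul_one]
    · rw [if_neg (Nat.not_even_two_mul_add_one n)]
      exact mul_eq_zero_of_right _ (Int.choose_eq_zero_of_lt (by omega) (by omega))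
  · intro i hi hne
    rw [mem_range] at hi
    rcases lt_or_gt_of_ne hne with h | h
    · exact mul_eq_zero_of_right _ (Int.choose_eq_zero_of_lt (by omega) (by omega))
    · exact mul_eq_zero_of_left (Int.choose_eq_zero_of_lt (by omega) (by omega)) _

lemma chooseStepTwoSum_natCast_self (k : ℕ) :
    chooseStepTwoSum k k = if Even k then 1 else 0 := by
  rw [chooseStepTwoSum, sum_eq_single_of_mem (k / 2) (by rw [mem_range]; omega)]
  · rcases Nat.even_or_odd' k with ⟨n, rfl | rfl⟩
    · rw [if_pos (even_two_mul n), show 2 * n - 2 * (2 * n / 2) = 0 by omega,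
        Ring.choose_zero_right]
    · rw [if_neg (Nat.not_even_two_mul_add_one n)]
      exact Int.choose_eq_zero_of_lt (by omega) (by omega)
  · intro j hj hne
    rw [mem_range] at hj
    exact Int.choose_eq_zero_of_lt (by omega) (by omega)

theorem chooseProdSum_eq_chooseStepTwoSum (k : ℕ) (m d : ℤ) :
    chooseProdSum m d k = chooseStepTwoSum (m + d) k := by
  induction k generalizing m d with
  | zero => simp [chooseProdSum, chooseStepTwoSum]
  | succ k ih =>
    set D : ℤ → ℤ → ℤ := fun m d => chooseProdSum m d (k + 1) - chooseStepTwoSum (m + d) (k + 1)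
    have hd (m : ℤ) : Function.Periodic (D m) 1 := fun d => by
      simp only [D, chooseProdSum_succ_right, ← add_assoc, chooseStepTwoSum_succ, ih]
      ring
    have hm : Function.Periodic (D · 0) 1 := fun m => by
      simp only [D, chooseProdSum_succ_left, add_right_comm m 1, chooseStepTwoSum_succ, ih]
      ring_nf
    have h0 : D (k + 1 : ℕ) 0 = 0 := by
      simp only [D, add_zero, chooseProdSum_natCast_zero_self, chooseStepTwoSum_natCast_self,
        sub_self]
    rw [← sub_eq_zero, ← h0]
    exact ((hd m).eq_of_period_one d 0).trans (hm.eq_of_period_one m _)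

theorem stmt2_general (m d : ℤ) (k : ℕ) :
    ∑ i ∈ Finset.range (k + 1),
        genChoose (m - i) i * genChoose ((i : ℤ) + d) (k - i) =
      ∑ j ∈ Finset.range (k / 2 + 1),
        genChoose (m + d - 1 - 2 * j) (k - 2 * j) := by
  simp only [genChoose_eq_choose]
  exact_mod_cast chooseProdSum_eq_chooseStepTwoSum k m d

theorem stmt2 (m d : ℤ) (k : ℕ) (hd : (k : ℤ) - m ≤ d) :
    ∑ i ∈ Finset.range (k + 1),
        genChoose (m - i) i * genChoose ((i : ℤ) + d) (k - i) =
      ∑ j ∈ Finset.range (k / 2 + 1),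
        genChoose (m + d - 1 - 2 * j) (k - 2 * j) :=
  stmt2_general m d k
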